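/- arXiv:1801.06947 — 2 statements merged into one kernel-verified Lean document; each statement's English description precedes it below -/
import Mathlib

section
/- Let k ≤ n be positive integers. Let σ be an ordered set partition of [n] = {1,…,n} into k blocks, let g = g_1⋯g_n be the word obtained by writing the blocks of σ in order with the elements of each block listed increasingly, and call a position 1 ≤ i ≤ n−1 a starred ascent if g_i < g_{i+1} and g_i, g_{i+1} lie in the same block of σ, an unstarred ascent if g_i < g_{i+1} and they lie in different blocks, and a descent if g_i > g_{i+1}. Set maj(g) = Σ_{i descent} i, comaj(σ) = maj(g) + #{(i,i′) : i < i′, i a starred ascent, i′ an unstarred ascent}, and maj_HRS(σ) = Σ_{i ascent of g} w_i, where w_i is the number of blocks of σ entirely contained in {g_1,…,g_i}. Then comaj(σ) = (n−k)(k−1) + k(k−1)/2 − maj_HRS(σ). -/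
open scoped Classical
open Finset

noncomputable section

/-- The descent set of the word `w` (0-indexed positions `i` with `w i > w (i+1)`). -/
def desSet0 (n : ℕ) (w : Equiv.Perm (Fin n)) : Finset (Fin n) :=
  univ.filter fun i => ∃ j : Fin n, (j : ℕ) = (i : ℕ) + 1 ∧ w j < w i

/-- Starred ascents: positions `i` with `w i < w (i+1)` and both letters in the same block. -/
def starAsc (n k : ℕ) (w : Equiv.Perm (Fin n)) (blk : Fin n → Fin k) : Finset (Fin n) :=
  univ.filter fun i => ∃ j : Fin n, (j : ℕ) = (i : ℕ) + 1 ∧ w i < w j ∧ blk (w i) = blk (w j)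

/-- Unstarred ascents: positions `i` with `w i < w (i+1)` whose letters lie in different
blocks. -/
def unstarAsc (n k : ℕ) (w : Equiv.Perm (Fin n)) (blk : Fin n → Fin k) : Finset (Fin n) :=
  univ.filter fun i => ∃ j : Fin n, (j : ℕ) = (i : ℕ) + 1 ∧ w i < w j ∧ blk (w i) ≠ blk (w j)

/-- `maj(g) = Σ_{i descent} i` (1-based positions). -/
def maj0 (n : ℕ) (w : Equiv.Perm (Fin n)) : ℕ :=
  ∑ i ∈ desSet0 n w, ((i : ℕ) + 1)

/-- `comaj(σ) = maj(g) + #{(i,i') : i < i', i a starred ascent, i' an unstarred ascent}`. -/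
def comaj0 (n k : ℕ) (w : Equiv.Perm (Fin n)) (blk : Fin n → Fin k) : ℕ :=
  maj0 n w + (univ.filter fun p : Fin n × Fin n =>
    (p.1 : ℕ) < (p.2 : ℕ) ∧ p.1 ∈ starAsc n k w blk ∧ p.2 ∈ unstarAsc n k w blk).card

/-- The weight `w_i`: the number of blocks entirely contained in `{g_1, …, g_{i+1}}`
(the first `i+1` letters, `i` 0-indexed). -/
def weight0 (n k : ℕ) (B : Fin k → Finset (Fin n)) (w : Equiv.Perm (Fin n)) (i : Fin n) : ℕ :=
  (univ.filter fun b : Fin k =>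
    B b ⊆ univ.filter fun a : Fin n => ∃ l : Fin n, l ≤ i ∧ w l = a).card

/-- The Haglund–Rhoades–Shimozono major index: the sum of the weights `w_i` over all
ascents `i` of `g`. -/
def majHRS (n k : ℕ) (B : Fin k → Finset (Fin n)) (w : Equiv.Perm (Fin n))
    (blk : Fin n → Fin k) : ℕ :=
  ∑ i ∈ starAsc n k w blk ∪ unstarAsc n k w blk, weight0 n k B w i

/-! Write `β t` for the index of the block containing the letter at (0-indexed) position `t`
of `g`. Since the blocks are nonempty and written in order, `β` climbs from `0` to `k - 1` in
steps of `0` or `1`. A step of `0` is exactly a starred ascent, and there the weight `w_t` is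
`β (t + 1)`; a step of `1` is an unstarred ascent or a descent. The positions before `t` that
are not starred ascents are the `β t` jumps, so an unstarred ascent at `t` closes `t - β t` of
the pairs counted by `comaj` and has weight `β t + 1`. Hence `comaj + maj_HRS` is the sum of
`β t` over the flat steps plus `t + 1` over the jumps, and a one-step induction evaluates this,
over the positions `t < m`, as `β m * m - C(β m, 2)`. -/

/-- The contribution of position `t` to `comaj + maj_HRS`, for a block-index sequence `β`. -/
def stepContribution (β : ℕ → ℕ) (t : ℕ) : ℕ :=
  if β (t + 1) = β t then β t else t + 1

section StepSequence

variable {β : ℕ → ℕ} {m : ℕ}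

lemma card_filter_flat_add_eq (h0 : β 0 = 0)
    (hstep : ∀ t < m, β (t + 1) = β t ∨ β (t + 1) = β t + 1) :
    #{t ∈ range m | β (t + 1) = β t} + β m = m := by
  induction m with
  | zero => simp [h0]
  | succ m ih =>
    rw [range_add_one, filter_insert]
    have ih := ih fun t ht => hstep t (by omega)
    have hm : m ∉ range m := by simp
    rcases hstep m (by omega) with h | h <;> simp [h, hm] at ih ⊢ <;> omega

lemma sum_stepContribution_add_choose_two (h0 : β 0 = 0)
    (hstep : ∀ t < m, β (t + 1) = β t ∨ β (t + 1) = β t + 1) :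
    ∑ t ∈ range m, stepContribution β t + (β m).choose 2 = β m * m := by
  induction m with
  | zero => simp [h0]
  | succ m ih =>
    have ih := ih fun t ht => hstep t (by omega)
    rw [sum_range_succ, stepContribution]
    rcases hstep m (by omega) with h | h
    · rw [if_pos h, h]
      linarith
    · rw [if_neg (by omega), h, Nat.choose_succ_succ', Nat.choose_one_right]
      linarith

end StepSequence

def natExtend {n k : ℕ} (f : Fin n → Fin k) (t : ℕ) : ℕ :=
  if h : t < n then f ⟨t, h⟩ else 0

section MonotoneSurjective

variable {n k : ℕ} {f : Fin n → Fin k}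

@[simp]
lemma natExtend_val (i : Fin n) : natExtend f i = f i := by
  simp [natExtend]

lemma natExtend_zero (hf : Monotone f) (hs : Function.Surjective f) : natExtend f 0 = 0 := by
  unfold natExtend
  split_ifs with hn
  · obtain ⟨p, hp⟩ := hs ⟨0, (f ⟨0, hn⟩).pos⟩
    have := hf (show (⟨0, hn⟩ : Fin n) ≤ p from Fin.le_def.mpr p.val.zero_le)
    simp_all [Fin.le_def]
  · rfl

lemma natExtend_pred_add_one (hf : Monotone f) (hs : Function.Surjective f) (hn : 0 < n) :
    natExtend f (n - 1) + 1 = k := by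
  have hlast := natExtend_val (f := f) ⟨n - 1, by omega⟩
  obtain ⟨p, hp⟩ := hs ⟨k - 1, by have := (f ⟨0, hn⟩).pos; omega⟩
  have := hf (show p ≤ ⟨n - 1, by omega⟩ from Fin.le_def.mpr (by simp; omega))
  simp_all [Fin.le_def]
  omega

lemma natExtend_succ_eq_or (hf : Monotone f) (hs : Function.Surjective f) {t : ℕ}
    (ht : t + 1 < n) :
    natExtend f (t + 1) = natExtend f t ∨ natExtend f (t + 1) = natExtend f t + 1 := by
  set i : Fin n := ⟨t, by omega⟩
  set j : Fin n := ⟨t + 1, ht⟩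
  rw [show t = i from rfl, show t + 1 = (j : ℕ) from rfl, natExtend_val, natExtend_val]
  have hij : (f i : ℕ) ≤ f j := hf (Fin.le_def.mpr (by simp [i, j]))
  by_contra! hgap
  obtain ⟨p, hp⟩ := hs ⟨f i + 1, by have := (f j).isLt; omega⟩
  have hfp : (f p : ℕ) = f i + 1 := by simp [hp]
  rcases le_or_gt p i with hpi | hip
  · have : (f p : ℕ) ≤ f i := hf hpi
    omega
  · have hjp : j ≤ p := Fin.le_def.mpr (by simp [Fin.lt_def, i, j] at hip ⊢; omega)
    have : (f j : ℕ) ≤ f p := hf hjp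
    omega

lemma forall_fiber_le_iff_lt (hf : Monotone f) (hs : Function.Surjective f) {i j : Fin n}
    (hij : (j : ℕ) = i + 1) {b : Fin k} : (∀ p, f p = b → p ≤ i) ↔ b < f j := by
  constructor
  · intro h
    by_contra! hjb
    obtain ⟨p, rfl⟩ := hs b
    have hpj : p < j := (h p rfl).trans_lt (Fin.lt_def.mpr (by omega))
    have := h j (le_antisymm hjb (hf hpj.le))
    rw [Fin.le_def] at this
    omega
  · rintro hb p rfl
    have := hf.reflect_lt hb
    rw [Fin.lt_def] at this
    rw [Fin.le_def]
    omega

end MonotoneSurjective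

lemma card_filter_prod_eq_sum {α γ : Type*} [Fintype α] [Fintype γ] (r : α → γ → Prop)
    [DecidableRel r] :
    #{p : α × γ | r p.1 p.2} = ∑ c, #{a | r a c} := by
  simp only [card_filter, Fintype.sum_prod_type]
  exact sum_comm

section Successor

variable {n : ℕ} {i j : Fin n} {P : Fin n → Prop}

lemma exists_val_eq_add_one_and_iff (hij : (j : ℕ) = i + 1) :
    (∃ l : Fin n, (l : ℕ) = i + 1 ∧ P l) ↔ P j :=
  ⟨fun ⟨_, hl, h⟩ => Fin.ext (hl.trans hij.symm) ▸ h, fun h => ⟨j, hij, h⟩⟩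

lemma not_exists_val_eq_add_one_and (hi : ¬(i : ℕ) + 1 < n) :
    ¬∃ l : Fin n, (l : ℕ) = i + 1 ∧ P l :=
  fun ⟨l, hl, _⟩ => hi (by rw [← hl]; exact l.isLt)

end Successor

section OrderedSetPartition

variable {n k : ℕ} {B : Fin k → Finset (Fin n)} {blk : Fin n → Fin k} {w : Equiv.Perm (Fin n)}

lemma blk_eq_of_mem (hdisj : ∀ b b', b ≠ b' → Disjoint (B b) (B b'))
    (hblk : ∀ x, x ∈ B (blk x)) {x : Fin n} {b : Fin k} (hx : x ∈ B b) : blk x = b := by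
  by_contra h
  exact disjoint_left.mp (hdisj _ _ h) (hblk x) hx

lemma surjective_blk_comp (hne : ∀ b, (B b).Nonempty)
    (hdisj : ∀ b b', b ≠ b' → Disjoint (B b) (B b')) (hblk : ∀ x, x ∈ B (blk x)) :
    Function.Surjective fun i => blk (w i) := by
  intro b
  obtain ⟨x, hx⟩ := hne b
  exact ⟨w.symm x, by simpa using blk_eq_of_mem hdisj hblk hx⟩

local notation "β" => natExtend fun i => blk (w i)

lemma weight0_eq (hdisj : ∀ b b', b ≠ b' → Disjoint (B b) (B b'))
    (hblk : ∀ x, x ∈ B (blk x)) (hmono : Monotone fun i => blk (w i))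
    (hsurj : Function.Surjective fun i => blk (w i))
    {i j : Fin n} (hij : (j : ℕ) = i + 1) : weight0 n k B w i = blk (w j) := by
  have hcomplete :
      ∀ b, B b ⊆ ({a | ∃ l ≤ i, w l = a} : Finset (Fin n)) ↔ b < blk (w j) := by
    intro b
    rw [← forall_fiber_le_iff_lt hmono hsurj hij]
    constructor
    · intro h p hp
      obtain ⟨l, hl, hwl⟩ := by simpa using h (hp ▸ hblk (w p))
      exact w.injective hwl ▸ hl
    · intro h x hx
      simpa using ⟨w.symm x, h (w.symm x) (by simpa using blk_eq_of_mem hdisj hblk hx), by simp⟩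
  rw [weight0, filter_congr fun b _ => hcomplete b, filter_gt_eq_Iio, Fin.card_Iio]

lemma mem_starAsc_iff
    (hword₂ : ∀ i j : Fin n, i ≤ j → blk (w i) = blk (w j) → w i ≤ w j)
    (i : Fin n) : i ∈ starAsc n k w blk ↔ (i : ℕ) + 1 < n ∧ β (i + 1) = β i := by
  simp only [starAsc, mem_filter, mem_univ, true_and]
  constructor
  · rintro ⟨j, hj, -, heq⟩
    refine ⟨hj ▸ j.isLt, ?_⟩
    rw [← hj, natExtend_val, natExtend_val, heq]
  · rintro ⟨hi, heq⟩
    set j : Fin n := ⟨i + 1, hi⟩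
    have hb : blk (w i) = blk (w j) := by
      rw [show (i : ℕ) + 1 = j from rfl, natExtend_val, natExtend_val] at heq
      exact Fin.ext heq.symm
    have hij : i < j := Fin.lt_def.mpr (by simp [j])
    exact ⟨j, rfl, (hword₂ i j hij.le hb).lt_of_ne (w.injective.ne hij.ne), hb⟩

lemma card_filter_starAsc_lt_add
    (hword₂ : ∀ i j : Fin n, i ≤ j → blk (w i) = blk (w j) → w i ≤ w j)
    (hmono : Monotone fun i => blk (w i)) (hsurj : Function.Surjective fun i => blk (w i))
    (i : Fin n) : #{l ∈ starAsc n k w blk | l < i} + β i = i := by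
  have hcard :
      #{l ∈ starAsc n k w blk | l < i} = #{t ∈ range i | β (t + 1) = β t} := by
    apply card_nbij (fun l : Fin n => (l : ℕ))
    · intro l hl
      simp only [coe_filter, Set.mem_ofPred_eq, mem_starAsc_iff hword₂] at hl
      simp [hl.1.2, hl.2]
    · exact Fin.val_injective.injOn
    · intro t ht
      simp only [coe_filter, mem_range, Set.mem_ofPred_eq] at ht
      refine ⟨⟨t, by omega⟩, ?_, rfl⟩
      simp only [coe_filter, Set.mem_ofPred_eq, mem_starAsc_iff hword₂]
      exact ⟨⟨by omega, ht.2⟩, ht.1⟩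
  rw [hcard]
  exact card_filter_flat_add_eq (natExtend_zero hmono hsurj)
    fun t ht => natExtend_succ_eq_or hmono hsurj (by omega)

lemma mem_desSet0_iff {i j : Fin n} (hij : (j : ℕ) = i + 1) :
    i ∈ desSet0 n w ↔ w j < w i := by
  simp only [desSet0, mem_filter, mem_univ, true_and, exists_val_eq_add_one_and_iff hij]

lemma mem_unstarAsc_iff {i j : Fin n} (hij : (j : ℕ) = i + 1) :
    i ∈ unstarAsc n k w blk ↔ w i < w j ∧ blk (w i) ≠ blk (w j) := by
  simp only [unstarAsc, mem_filter, mem_univ, true_and, exists_val_eq_add_one_and_iff hij]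

lemma position_contribution_eq (hdisj : ∀ b b', b ≠ b' → Disjoint (B b) (B b'))
    (hblk : ∀ x, x ∈ B (blk x))
    (hword₂ : ∀ i j : Fin n, i ≤ j → blk (w i) = blk (w j) → w i ≤ w j)
    (hmono : Monotone fun i => blk (w i)) (hsurj : Function.Surjective fun i => blk (w i))
    (i : Fin n) :
    (if i ∈ desSet0 n w then (i : ℕ) + 1 else 0)
      + (if i ∈ unstarAsc n k w blk then #{l ∈ starAsc n k w blk | l < i} else 0)
      + (if i ∈ starAsc n k w blk ∪ unstarAsc n k w blk then weight0 n k B w i else 0)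
    = if (i : ℕ) + 1 < n then stepContribution β i else 0 := by
  by_cases hi : (i : ℕ) + 1 < n
  swap
  · simp [desSet0, starAsc, unstarAsc, not_exists_val_eq_add_one_and hi, hi]
  set j : Fin n := ⟨i + 1, hi⟩
  have hij : (j : ℕ) = i + 1 := rfl
  have hlt : i < j := Fin.lt_def.mpr (by simp [j])
  have hβj : β (i + 1) = blk (w j) := natExtend_val j
  have hβi : β i = blk (w i) := natExtend_val i
  have hbelow := card_filter_starAsc_lt_add hword₂ hmono hsurj i
  have hweight := weight0_eq hdisj hblk hmono hsurj hij
  rw [if_pos hi, stepContribution]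
  simp only [mem_union, mem_starAsc_iff hword₂, mem_unstarAsc_iff hij, mem_desSet0_iff hij]
  rcases natExtend_succ_eq_or hmono hsurj hi with hflat | hjump
  · have hb : blk (w i) = blk (w j) := Fin.ext (by omega)
    have hw : w i < w j := (hword₂ i j hlt.le hb).lt_of_ne (w.injective.ne hlt.ne)
    simp [hb, hw, hw.not_gt, hflat, hweight, hi]
  · have hb : blk (w i) ≠ blk (w j) := fun h => by rw [h] at hβi; omega
    rcases (w.injective.ne hlt.ne).lt_or_gt with hw | hw
    · simp [hb, hw, hw.not_gt, hjump, hweight]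
      omega
    · simp [hb, hw, hw.not_gt, hjump]

lemma comaj0_add_majHRS_eq_sum (hdisj : ∀ b b', b ≠ b' → Disjoint (B b) (B b'))
    (hblk : ∀ x, x ∈ B (blk x))
    (hword₂ : ∀ i j : Fin n, i ≤ j → blk (w i) = blk (w j) → w i ≤ w j)
    (hmono : Monotone fun i => blk (w i)) (hsurj : Function.Surjective fun i => blk (w i)) :
    comaj0 n k w blk + majHRS n k B w blk = ∑ t ∈ range (n - 1), stepContribution β t := by
  have hpairs : #{p : Fin n × Fin n |
        (p.1 : ℕ) < p.2 ∧ p.1 ∈ starAsc n k w blk ∧ p.2 ∈ unstarAsc n k w blk}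
      = ∑ i ∈ unstarAsc n k w blk, #{l ∈ starAsc n k w blk | l < i} := by
    rw [card_filter_prod_eq_sum fun l i : Fin n => (l : ℕ) < i ∧ l ∈ starAsc n k w blk ∧
      i ∈ unstarAsc n k w blk, ← univ_inter (unstarAsc n k w blk), ← sum_ite_mem]
    refine sum_congr rfl fun i _ => ?_
    split_ifs with hi
    · congr 1
      ext l
      simp [hi, and_comm]
    · simp [hi]
  calc comaj0 n k w blk + majHRS n k B w blk
      = ∑ i : Fin n, ((if i ∈ desSet0 n w then (i : ℕ) + 1 else 0)
          + (if i ∈ unstarAsc n k w blk then #{l ∈ starAsc n k w blk | l < i} else 0)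
          + (if i ∈ starAsc n k w blk ∪ unstarAsc n k w blk then weight0 n k B w i
              else 0)) := by
        simp only [sum_add_distrib, sum_ite_mem, univ_inter, comaj0, maj0, majHRS, hpairs]
    _ = ∑ i : Fin n, if (i : ℕ) + 1 < n then stepContribution β i else 0 :=
        sum_congr rfl fun i _ => position_contribution_eq hdisj hblk hword₂ hmono hsurj i
    _ = ∑ t ∈ range (n - 1), stepContribution β t := by
        rw [Fin.sum_univ_eq_sum_range (fun t => if t + 1 < n then stepContribution β t else 0),
          ← sum_filter]
        congr 1
        ext t
        simp only [mem_filter, mem_range]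
        omega

end OrderedSetPartition

theorem comaj_eq_of_ordered_set_partition_general (n k : ℕ) (hk : 1 ≤ k) (hkn : k ≤ n)
    (B : Fin k → Finset (Fin n))
    (hne : ∀ b, (B b).Nonempty)
    (hdisj : ∀ b b', b ≠ b' → Disjoint (B b) (B b'))
    (blk : Fin n → Fin k) (hblk : ∀ x, x ∈ B (blk x))
    (w : Equiv.Perm (Fin n))
    (hword₁ : ∀ i j : Fin n, i ≤ j → blk (w i) ≤ blk (w j))
    (hword₂ : ∀ i j : Fin n, i ≤ j → blk (w i) = blk (w j) → w i ≤ w j) :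
    (comaj0 n k w blk : ℤ) =
      ((n : ℤ) - k) * ((k : ℤ) - 1) + (Nat.choose k 2 : ℤ) - majHRS n k B w blk := by
  have hmono : Monotone fun i => blk (w i) := fun i j h => hword₁ i j h
  have hsurj := surjective_blk_comp (w := w) hne hdisj hblk
  have hsum := sum_stepContribution_add_choose_two (m := n - 1) (natExtend_zero hmono hsurj)
    fun t ht => natExtend_succ_eq_or hmono hsurj (by omega)
  have hlast := natExtend_pred_add_one hmono hsurj (by omega)
  rw [← comaj0_add_majHRS_eq_sum hdisj hblk hword₂ hmono hsurj] at hsum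
  obtain ⟨k, rfl⟩ : ∃ k', k = k' + 1 := ⟨k - 1, by omega⟩
  obtain ⟨n, rfl⟩ : ∃ n', n = n' + 1 := ⟨n - 1, by omega⟩
  simp only [Nat.add_sub_cancel, Nat.add_right_cancel_iff] at hsum hlast
  rw [hlast] at hsum
  have hchoose : (k + 1).choose 2 = k + k.choose 2 := by simp [Nat.choose_succ_succ']
  have htwice : (k + 1) * k = (k + 1).choose 2 * 2 := by
    simpa using Nat.add_one_mul_choose_eq k 1
  zify at hsum hchoose htwice
  push_cast
  linear_combination hsum + hchoose + htwice

/-- For an ordered set partition `σ` of `[n]` into `k` blocks, with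
canonical word `g` (blocks in order, elements of each block increasing),
`comaj(σ) = (n-k)(k-1) + C(k,2) - maj_HRS(σ)`. Here `B` lists the blocks, `blk` assigns to
each element its block, and `w` is the canonical word (position `i` holds the letter `w i`). -/
theorem comaj_eq_of_ordered_set_partition (n k : ℕ) (hk : 1 ≤ k) (hkn : k ≤ n)
    (B : Fin k → Finset (Fin n))
    (hne : ∀ b, (B b).Nonempty)
    (hdisj : ∀ b b', b ≠ b' → Disjoint (B b) (B b'))
    (hcover : ∀ x : Fin n, ∃ b, x ∈ B b)
    (blk : Fin n → Fin k) (hblk : ∀ x, x ∈ B (blk x))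
    (w : Equiv.Perm (Fin n))
    (hword₁ : ∀ i j : Fin n, i ≤ j → blk (w i) ≤ blk (w j))
    (hword₂ : ∀ i j : Fin n, i ≤ j → blk (w i) = blk (w j) → w i ≤ w j) :
    (comaj0 n k w blk : ℤ) =
      ((n : ℤ) - k) * ((k : ℤ) - 1) + (Nat.choose k 2 : ℤ) - majHRS n k B w blk :=
  comaj_eq_of_ordered_set_partition_general n k hk hkn B hne hdisj blk hblk w hword₁ hword₂

end
end

section
/- Every multichain monomial y = y_{S_1}⋯y_{S_t} (with ∅ ≠ S_1 ⊆ ⋯ ⊆ S_t ⊆ [n]) in ℂ[y_S] is equal to b̃_{(g,d)} for exactly one pair (g,d) ∈ G_n × ℤ_{≥0}^n. -/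
open scoped Classical
open MvPolynomial Finset

noncomputable section

/-- Nonempty subsets of `[n]`, the index set of the variables `y_S`. -/
abbrev NES (n : ℕ) := {S : Finset (Fin n) // S.Nonempty}

/-- The polynomial ring `ℂ[y_S]`. -/
abbrev YRing (n : ℕ) := MvPolynomial (NES n) ℂ

/-- The polynomial ring `ℂ[x_1, …, x_n]`. -/
abbrev XRing (n : ℕ) := MvPolynomial (Fin n) ℂ

/-- The variable `y_F`, with junk value `1` when `F = ∅`. -/
def Yv {n : ℕ} (F : Finset (Fin n)) : YRing n :=
  if h : F.Nonempty then X ⟨F, h⟩ else 1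

/-- `θ_i = Σ_{|S| = i} y_S^r`. -/
def theta (n r i : ℕ) : YRing n :=
  ∑ S ∈ univ.filter (fun S : NES n => S.1.card = i), X S ^ r

/-- Stanley–Reisner generators `y_S y_T` for incomparable `S, T`. -/
def srSet (n : ℕ) : Set (YRing n) :=
  {p | ∃ S T : NES n, ¬ S.1 ⊆ T.1 ∧ ¬ T.1 ⊆ S.1 ∧ p = X S * X T}

/-- The generators `θ_{n-k+1}, …, θ_n`. -/
def thetaSet (n k r : ℕ) : Set (YRing n) :=
  {p | ∃ i : ℕ, n - k + 1 ≤ i ∧ i ≤ n ∧ p = theta n r i}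

/-- Products `y_{S_1} ⋯ y_{S_m}` over multichains `S_1 ⊆ ⋯ ⊆ S_m` of length `m`. -/
def chainSet (n m : ℕ) : Set (YRing n) :=
  {p | ∃ S : Fin m → NES n, (∀ i j : Fin m, i ≤ j → (S i).1 ⊆ (S j).1) ∧ p = ∏ i, X (S i)}

def SRideal (n : ℕ) : Ideal (YRing n) := Ideal.span (srSet n)

def STideal (n k r : ℕ) : Ideal (YRing n) := Ideal.span (srSet n ∪ thetaSet n k r)

/-- The ideal `𝓙_{n,k}`. -/
def Jideal (n k r : ℕ) : Ideal (YRing n) :=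
  Ideal.span (srSet n ∪ thetaSet n k r ∪ chainSet n (k * r))

/-- The ideal `𝓘_{n,k}`. -/
def Iideal (n k r : ℕ) : Ideal (YRing n) :=
  Ideal.span (srSet n ∪ thetaSet n k r ∪ chainSet n (k * r + 1))

/-- An `r`-colored word of length `m` on distinct letters from `[n]`. -/
structure CWord (n r m : ℕ) where
  letter : Fin m → Fin n
  inj : Function.Injective letter
  color : Fin m → Fin r

/-- `r`-colored permutations of `[n]`, i.e. the group `G(r,1,n)` as a set. -/
abbrev CPerm (n r : ℕ) := CWord n r n

/-- The order on colored letters: `(a,c) < (b,d)` iff `c > d`, or `c = d` and `a < b`. -/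
def colLt {n r : ℕ} (a b : Fin n × Fin r) : Prop :=
  b.2 < a.2 ∨ (a.2 = b.2 ∧ a.1 < b.1)

/-- The descent set of a colored word (0-indexed positions). -/
def DesSet {n r m : ℕ} (w : CWord n r m) : Finset (Fin m) :=
  univ.filter fun i => ∃ j : Fin m, (j : ℕ) = (i : ℕ) + 1 ∧
    colLt (w.letter j, w.color j) (w.letter i, w.color i)

def desNum {n r m : ℕ} (w : CWord n r m) : ℕ := (DesSet w).card

/-- `maj(w) = Σ colors + r · Σ_{i ∈ Des(w)} i` (1-based positions). -/
def majW {n r m : ℕ} (w : CWord n r m) : ℕ :=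
  (∑ i, (w.color i : ℕ)) + r * ∑ i ∈ DesSet w, ((i : ℕ) + 1)

/-- The set of the first `t` letters of `w`. -/
def pref {n r m : ℕ} (w : CWord n r m) (t : ℕ) : Finset (Fin n) :=
  univ.filter fun a => ∃ l : Fin m, (l : ℕ) < t ∧ w.letter l = a

/-- The exponent `m_i = c_i - c_{i+1} + r·[i ∈ Des(g)]` (and `m_last = c_last`). -/
def mExp {n r m : ℕ} (w : CWord n r m) (i : Fin m) : ℕ :=
  (((w.color i : ℤ) - (if h : (i : ℕ) + 1 < m then (w.color ⟨(i : ℕ) + 1, h⟩ : ℤ) else 0))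
    + (if i ∈ DesSet w then (r : ℤ) else 0)).toNat

/-- The descent monomial `b̃_w`. -/
def btw {n r m : ℕ} (w : CWord n r m) : YRing n :=
  ∏ i : Fin m, Yv (pref w ((i : ℕ) + 1)) ^ mExp w i

/-- `b̃_{(g,d)} = b̃_g · Π_i y_{T_i}^{r d_i}`. -/
def btd {n r : ℕ} (g : CPerm n r) (d : Fin n → ℕ) : YRing n :=
  btw g * ∏ i : Fin n, Yv (pref g ((i : ℕ) + 1)) ^ (r * d i)

/-- `b̃_{(w,λ)} = b̃_w · Π_j y_{S_{λ_j}}^r` for a list `λ` of parts. -/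
def btl {n r m : ℕ} (w : CWord n r m) (lam : List ℕ) : YRing n :=
  btw w * (lam.map fun p => Yv (pref w p) ^ r).prod

/-- `r`-colored ordered set partitions of `[n]` with `k` blocks, encoded as pairs `(g, λ)`. -/
structure OPIdx (n k r : ℕ) where
  g : CPerm n r
  lam : List ℕ
  sorted : lam.Pairwise (· ≥ ·)
  pos : ∀ p ∈ lam, 1 ≤ p
  parts_le : ∀ p ∈ lam, p ≤ n - k
  len : lam.length + desNum g + 1 ≤ k

def btOP {n k r : ℕ} (o : OPIdx n k r) : YRing n := btl o.g o.lam

/-- `k`-dimensional `G_n`-faces, encoded as triples `(Z, w, λ)`. -/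
structure FIdx (n k r : ℕ) where
  Z : Finset (Fin n)
  cardZ : Z.card ≤ n - k
  w : CWord n r (n - Z.card)
  mem : ∀ j, w.letter j ∉ Z
  lam : List ℕ
  sorted : lam.Pairwise (· ≥ ·)
  pos : ∀ p ∈ lam, 1 ≤ p
  parts_le : ∀ p ∈ lam, p ≤ n - Z.card - k
  len : lam.length + desNum w + 1 ≤ k

/-- The monomial `b̃_{(Z,g,λ)}`. -/
def btF {n k r : ℕ} (f : FIdx n k r) : YRing n :=
  Yv f.Z ^ (k * r - (btl f.w f.lam).totalDegree) *
    ((∏ i : Fin (n - f.Z.card), Yv (pref f.w ((i : ℕ) + 1) ∪ f.Z) ^ mExp f.w i) *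
      (f.lam.map fun p => Yv (pref f.w p ∪ f.Z) ^ r).prod)

/-- The transfer map `φ : ℂ[y_S] → ℂ[x_n]`, `y_S ↦ Π_{i ∈ S} x_i`. -/
def phi (n : ℕ) : YRing n →ₐ[ℂ] XRing n := aeval fun S : NES n => ∏ i ∈ S.1, X i

/-- An element of `G(r,1,n)`: a permutation together with `r`-th roots of unity. -/
structure GElem (n r : ℕ) where
  perm : Equiv.Perm (Fin n)
  scalar : Fin n → ℂ
  root : ∀ i, scalar i ^ r = 1

/-- The action of `G(r,1,n)` on `ℂ[x_n]` by linear substitution. -/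
def actX {n r : ℕ} (g : GElem n r) : XRing n →ₐ[ℂ] XRing n :=
  aeval fun i => g.scalar i • X (g.perm i)

/-- The action of `G(r,1,n)` on `ℂ[y_S]`, `g · y_S = α · y_{g(S)}`. -/
def actY {n r : ℕ} (g : GElem n r) : YRing n →ₐ[ℂ] YRing n :=
  aeval fun S : NES n =>
    (∏ i ∈ S.1, g.scalar i) • X (⟨S.1.image g.perm, S.2.image _⟩ : NES n)

/-- An exponent vector is a multichain if its support is a chain of subsets. -/
def IsChainE {n : ℕ} (e : NES n →₀ ℕ) : Prop :=
  ∀ S ∈ e.support, ∀ T ∈ e.support, S.1 ⊆ T.1 ∨ T.1 ⊆ S.1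

/-- `μ(y)`: the multiset of sizes (with multiplicity) of a monomial with exponents `e`. -/
def muE {n : ℕ} (e : NES n →₀ ℕ) : Multiset ℕ :=
  e.sum fun S m => Multiset.replicate m S.1.card

/-- Sum of the `j` largest entries of a multiset of naturals. -/
def psum (a : Multiset ℕ) (j : ℕ) : ℕ := (((a.sort (· ≤ ·)).reverse).take j).sum

/-- Dominance order on partitions (encoded as multisets) of the same number. -/
def domLE (a b : Multiset ℕ) : Prop := a.sum = b.sum ∧ ∀ j, psum a j ≤ psum b j

/-- Strict dominance order. -/
def domLT (a b : Multiset ℕ) : Prop := domLE a b ∧ a ≠ b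

/-- Order on the variables: `y_S > y_T` iff `|S| > |T|`, or `|S| = |T|` and
`min (S \ T) < min (T \ S)`. -/
def varGt {n : ℕ} (S T : NES n) : Prop :=
  T.1.card < S.1.card ∨
    (S.1.card = T.1.card ∧ ∃ a ∈ S.1 \ T.1, ∀ b ∈ T.1 \ S.1, a < b)

/-- The graded lexicographic order on monomials (exponent vectors) of `ℂ[y_S]`. -/
def monLt {n : ℕ} (e f : NES n →₀ ℕ) : Prop :=
  (e.sum fun _ m => m) < (f.sum fun _ m => m) ∨
    ((e.sum fun _ m => m) = (f.sum fun _ m => m) ∧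
      ∃ S, e S < f S ∧ ∀ T, varGt T S → e T = f T)

/-- `e` is the leading monomial of `p`. -/
def IsLM {n : ℕ} (p : YRing n) (e : NES n →₀ ℕ) : Prop :=
  e ∈ p.support ∧ ∀ f ∈ p.support, f ≠ e → monLt f e

/-- The ideal of leading monomials of nonzero elements of `I`. -/
def LMideal {n : ℕ} (I : Ideal (YRing n)) : Ideal (YRing n) :=
  Ideal.span {q | ∃ p e, p ∈ I ∧ p ≠ 0 ∧ IsLM p e ∧ q = (monomial e 1 : YRing n)}

/-- `e_d(x_1^r, …, x_n^r)`. -/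
def esymmR (n r d : ℕ) : XRing n :=
  ∑ t ∈ (univ : Finset (Fin n)).powersetCard d, ∏ i ∈ t, X i ^ r

/-- The ideal `J_{n,k}` of Chan–Rhoades. -/
def Jx (n k r : ℕ) : Ideal (XRing n) :=
  Ideal.span ({p | ∃ i : Fin n, p = X i ^ (k * r)} ∪
    {p | ∃ d : ℕ, n - k + 1 ≤ d ∧ d ≤ n ∧ p = esymmR n r d})

/-- The ideal `I_{n,k}` of Chan–Rhoades. -/
def Ix (n k r : ℕ) : Ideal (XRing n) :=
  Ideal.span ({p | ∃ i : Fin n, p = X i ^ (k * r + 1)} ∪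
    {p | ∃ d : ℕ, n - k + 1 ≤ d ∧ d ≤ n ∧ p = esymmR n r d})

/-!
A monomial `y^e` is read off through its content: the number `c(l)` of factors `y_V` with
`l ∈ V`. A multichain monomial is determined by its content, because its smallest set consists
of the letters of maximal content, and peeling that set off leaves a shorter multichain.

For `b̃_{(g,d)}` the content of the letter `π_i` is the tail sum `B_i = Σ_{j ≥ i} (m_j + r d_j)`.
The tail sums are weakly decreasing, `B_i ≡ c_i (mod r)` because `m_j ≡ c_j - c_{j+1}`, and
`B_i = B_{i+1}` forces `m_i = 0`, hence `π_i < π_{i+1}`. So `g` is recovered by sorting the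
letters by decreasing content with ties in increasing order, its colors are the contents
modulo `r`, and `d` comes from the differences `B_i - B_{i+1}`. Conversely this recipe turns
every content vector into a pair `(g, d)`, so `(g, d) ↦ content(b̃_{(g,d)})` is a bijection
`G_n × ℕⁿ → ℕⁿ`, and the multichain monomial with the same content is `b̃_{(g,d)}`.
-/

section Content

variable {n : ℕ}

/-- The exponent of `x_l` in `φ(y^e)`. -/
def content : (NES n →₀ ℕ) →+ (Fin n → ℕ) where
  toFun e l := ∑ V ∈ univ.filter (fun V : NES n => l ∈ V.1), e V
  map_zero' := by simp; rfl
  map_add' e f := by funext l; simp [sum_add_distrib]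

lemma content_apply (e : NES n →₀ ℕ) (l : Fin n) :
    content e l = ∑ V ∈ univ.filter (fun V : NES n => l ∈ V.1), e V := rfl

lemma content_single (V : NES n) (k : ℕ) (l : Fin n) :
    content (Finsupp.single V k) l = if l ∈ V.1 then k else 0 := by
  simp [content_apply, Finsupp.single_apply]

lemma content_le_degree (e : NES n →₀ ℕ) (l : Fin n) : content e l ≤ e.degree := by
  rw [Finsupp.degree_eq_sum]
  exact sum_le_sum_of_subset (filter_subset _ (univ : Finset (NES n)))

lemma content_eq_degree_iff (e : NES n →₀ ℕ) (l : Fin n) :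
    content e l = e.degree ↔ ∀ V ∈ e.support, l ∈ V.1 := by
  rw [Finsupp.degree_eq_sum, ← sum_filter_add_sum_filter_not univ (fun V : NES n => l ∈ V.1) e,
    content_apply, left_eq_add, sum_eq_zero_iff]
  simp only [mem_filter, mem_univ, true_and, Finsupp.mem_support_iff]
  exact forall_congr' fun V => not_imp_comm

lemma mem_iff_content_eq_degree {e : NES n →₀ ℕ} {V : NES n} (hV : V ∈ e.support)
    (hmin : ∀ W ∈ e.support, V.1 ⊆ W.1) (l : Fin n) : l ∈ V.1 ↔ content e l = e.degree := by
  rw [content_eq_degree_iff]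
  exact ⟨fun hl W hW => hmin W hW hl, fun h => h V hV⟩

lemma isChainE_sum_single {ι : Type*} [LinearOrder ι] (s : Finset ι) {S : ι → NES n}
    (hS : Monotone fun j => (S j).1) (k : ι → ℕ) :
    IsChainE (∑ j ∈ s, Finsupp.single (S j) (k j)) := by
  have hmem : ∀ V ∈ (∑ j ∈ s, Finsupp.single (S j) (k j)).support, ∃ j, V = S j := by
    intro V hV
    obtain ⟨j, -, hj⟩ := mem_biUnion.1 (Finsupp.support_finsetSum hV)
    exact ⟨j, mem_singleton.1 (Finsupp.support_single_subset hj)⟩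
  intro V hV W hW
  obtain ⟨i, rfl⟩ := hmem V hV
  obtain ⟨j, rfl⟩ := hmem W hW
  exact (le_total i j).imp (fun h => hS h) (fun h => hS h)

lemma IsChainE.mono {e f : NES n →₀ ℕ} (hf : IsChainE f) (h : e.support ⊆ f.support) :
    IsChainE e :=
  fun V hV W hW => hf V (h hV) W (h hW)

lemma IsChainE.exists_subset_forall {e : NES n →₀ ℕ} (he : IsChainE e) (h0 : e ≠ 0) :
    ∃ V ∈ e.support, ∀ W ∈ e.support, V.1 ⊆ W.1 := by
  obtain ⟨V, hV, hmin⟩ :=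
    e.support.exists_min_image (fun V : NES n => V.1.card) (Finsupp.support_nonempty_iff.2 h0)
  refine ⟨V, hV, fun W hW => ?_⟩
  rcases he V hV W hW with hVW | hWV
  · exact hVW
  · exact (eq_of_subset_of_card_le hWV (hmin W hW)).ge

lemma IsChainE.degree_le_of_content_le {e f : NES n →₀ ℕ} (he : IsChainE e)
    (h : content e ≤ content f) : e.degree ≤ f.degree := by
  rcases eq_or_ne e 0 with rfl | h0
  · simp
  obtain ⟨V, hV, hmin⟩ := he.exists_subset_forall h0
  obtain ⟨l, hl⟩ := V.2
  calc e.degree = content e l := ((mem_iff_content_eq_degree hV hmin l).1 hl).symm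
    _ ≤ content f l := h l
    _ ≤ f.degree := content_le_degree f l

lemma exists_eq_add_single {e : NES n →₀ ℕ} {V : NES n} (hV : V ∈ e.support) :
    ∃ e', e = e' + Finsupp.single V 1 ∧ e'.support ⊆ e.support :=
  ⟨e - Finsupp.single V 1,
    (tsub_add_cancel_of_le (Finsupp.single_le_iff.2 (Nat.one_le_iff_ne_zero.2
      (Finsupp.mem_support_iff.1 hV)))).symm,
    Finsupp.support_tsub⟩

theorem IsChainE.eq_of_content_eq {e f : NES n →₀ ℕ} (he : IsChainE e) (hf : IsChainE f)
    (h : content e = content f) : e = f := by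
  have hdeg : e.degree = f.degree :=
    le_antisymm (he.degree_le_of_content_le h.le) (hf.degree_le_of_content_le h.ge)
  induction hD : e.degree generalizing e f with
  | zero =>
    rw [Finsupp.degree_eq_zero_iff] at hD
    rw [hD, eq_comm, ← Finsupp.degree_eq_zero_iff, ← hdeg, hD, map_zero]
  | succ D ih =>
    have hne : ∀ g : NES n →₀ ℕ, g.degree = D + 1 → g ≠ 0 := by rintro _ hg rfl; simp at hg
    obtain ⟨V, hV, hVmin⟩ := he.exists_subset_forall (hne e hD)
    obtain ⟨W, hW, hWmin⟩ := hf.exists_subset_forall (hne f (hdeg ▸ hD))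
    obtain rfl : V = W := Subtype.ext <| Finset.ext fun l => by
      rw [mem_iff_content_eq_degree hV hVmin, mem_iff_content_eq_degree hW hWmin, h, hdeg]
    obtain ⟨e', rfl, he'⟩ := exists_eq_add_single hV
    obtain ⟨f', rfl, hf'⟩ := exists_eq_add_single hW
    have hc : content e' = content f' := by simpa only [map_add, add_left_inj] using h
    have hd : e'.degree = D := by simpa using hD
    rw [ih (he.mono he') (hf.mono hf') hc (by simpa using hdeg) hd]

end Content

section ColoredWords

variable {n r m : ℕ}

lemma letter_mem_pref_iff (w : CWord n r m) (j : Fin m) (t : ℕ) :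
    w.letter j ∈ pref w t ↔ (j : ℕ) < t := by
  simp only [pref, mem_filter, mem_univ, true_and]
  exact ⟨fun ⟨l, hl, hlj⟩ => w.inj hlj ▸ hl, fun h => ⟨j, h, rfl⟩⟩

lemma pref_mono (w : CWord n r m) : Monotone (pref w) := by
  intro s t hst a
  simp only [pref, mem_filter, mem_univ, true_and]
  exact fun ⟨l, hl, hla⟩ => ⟨l, hl.trans_le hst, hla⟩

def prefV (w : CWord n r m) (i : Fin m) : NES n :=
  ⟨pref w (i + 1), w.letter i, (letter_mem_pref_iff w i _).2 (Nat.lt_succ_self _)⟩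

lemma Yv_pref (w : CWord n r m) (i : Fin m) : Yv (pref w (i + 1)) = X (prefV w i) :=
  dif_pos _

lemma monotone_prefV (w : CWord n r m) : Monotone fun i => (prefV w i).1 :=
  fun _ _ hij => pref_mono w (Nat.succ_le_succ hij)

/-- Past the end the color is `0`: the convention `c_{n+1} = 0` behind `m_n = c_n`. -/
def colorAt (w : CWord n r m) (i : ℕ) : ℕ := if h : i < m then w.color ⟨i, h⟩ else 0

lemma colorAt_val (w : CWord n r m) (i : Fin m) : colorAt w i = w.color i := dif_pos i.2

lemma colorAt_of_le (w : CWord n r m) {i : ℕ} (h : m ≤ i) : colorAt w i = 0 :=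
  dif_neg (not_lt.2 h)

lemma colorAt_le (w : CWord n r m) (i : ℕ) : colorAt w i ≤ r := by
  unfold colorAt
  split
  · exact (Fin.is_lt _).le
  · exact Nat.zero_le r

lemma mem_DesSet_iff (w : CWord n r m) (i : Fin m) :
    i ∈ DesSet w ↔ ∃ h : (i : ℕ) + 1 < m, (w.color i : ℕ) < w.color ⟨i + 1, h⟩ ∨
      ((w.color ⟨i + 1, h⟩ : ℕ) = w.color i ∧ w.letter ⟨i + 1, h⟩ < w.letter i) := by
  simp only [DesSet, colLt, mem_filter, mem_univ, true_and, Fin.lt_def, Fin.val_inj]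
  constructor
  · rintro ⟨j, hj, hlt⟩
    have hi : (i : ℕ) + 1 < m := hj ▸ j.2
    rw [show j = ⟨i + 1, hi⟩ from Fin.ext hj] at hlt
    exact ⟨hi, hlt⟩
  · rintro ⟨h, hlt⟩
    exact ⟨⟨i + 1, h⟩, rfl, by simpa [← Fin.val_inj] using hlt⟩

lemma color_le_colorAt_succ_of_mem_DesSet {w : CWord n r m} {i : Fin m} (h : i ∈ DesSet w) :
    (w.color i : ℕ) ≤ colorAt w (i + 1) ∧ colorAt w (i + 1) < r := by
  obtain ⟨hi, hlt⟩ := (mem_DesSet_iff w i).1 h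
  simp only [colorAt, dif_pos hi]
  exact ⟨by omega, Fin.is_lt _⟩

lemma colorAt_succ_le_color_of_notMem_DesSet {w : CWord n r m} {i : Fin m}
    (h : i ∉ DesSet w) : colorAt w (i + 1) ≤ w.color i := by
  unfold colorAt
  split_ifs with hi
  · by_contra hlt
    exact h ((mem_DesSet_iff w i).2 ⟨hi, Or.inl (by omega)⟩)
  · exact Nat.zero_le _

lemma mExp_eq_ite (w : CWord n r m) (i : Fin m) :
    mExp w i = if i ∈ DesSet w then r + w.color i - colorAt w (i + 1)
      else w.color i - colorAt w (i + 1) := by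
  have hnext : (if h : (i : ℕ) + 1 < m then (w.color ⟨i + 1, h⟩ : ℤ) else 0) =
      (colorAt w (i + 1) : ℤ) := by
    unfold colorAt
    split <;> simp
  have hle := colorAt_le w (i + 1)
  rw [mExp, hnext]
  split_ifs with hd
  · omega
  · have := colorAt_succ_le_color_of_notMem_DesSet hd
    omega

lemma natCast_mExp (w : CWord n r m) (i : Fin m) :
    (mExp w i : ZMod r) = w.color i - colorAt w (i + 1) := by
  rw [mExp_eq_ite]
  split_ifs with hd
  · rw [Nat.cast_sub (by have := colorAt_le w (i + 1); omega), Nat.cast_add, ZMod.natCast_self,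
      zero_add]
  · rw [Nat.cast_sub (colorAt_succ_le_color_of_notMem_DesSet hd)]

lemma notMem_DesSet_of_color_eq_of_letter_lt {w : CWord n r m} {i : Fin m}
    (h : ∀ hi : (i : ℕ) + 1 < m,
      (w.color ⟨i + 1, hi⟩ : ℕ) = w.color i ∧ w.letter i < w.letter ⟨i + 1, hi⟩) :
    i ∉ DesSet w := by
  rintro hd
  obtain ⟨hi, hlt⟩ := (mem_DesSet_iff w i).1 hd
  have := h hi
  omega

lemma letter_lt_of_mExp_eq_zero {w : CWord n r m} {i : Fin m} (h0 : mExp w i = 0)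
    (hi : (i : ℕ) + 1 < m) : w.letter i < w.letter ⟨i + 1, hi⟩ := by
  rw [mExp_eq_ite] at h0
  split_ifs at h0 with hd
  · have := (color_le_colorAt_succ_of_mem_DesSet hd).2
    omega
  · have hc : (w.color ⟨i + 1, hi⟩ : ℕ) = w.color i := by
      have := colorAt_succ_le_color_of_notMem_DesSet hd
      rw [colorAt, dif_pos hi] at this h0
      omega
    have hne : w.letter i ≠ w.letter ⟨i + 1, hi⟩ := fun h => by
      simpa [Fin.ext_iff] using w.inj h
    by_contra hge
    exact hd ((mem_DesSet_iff w i).2 ⟨hi, Or.inr ⟨hc, lt_of_le_of_ne (not_lt.1 hge) hne.symm⟩⟩)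

end ColoredWords

section TailSum

variable {m : ℕ}

def tailSum (E : Fin m → ℕ) (i : ℕ) : ℕ := ∑ j ∈ univ.filter (fun j : Fin m => i ≤ j), E j

lemma tailSum_of_le (E : Fin m → ℕ) {i : ℕ} (h : m ≤ i) : tailSum E i = 0 :=
  sum_eq_zero fun j hj => absurd ((mem_filter.1 hj).2.trans_lt j.2) (not_lt.2 h)

lemma tailSum_eq_add (E : Fin m → ℕ) (i : Fin m) : tailSum E i = E i + tailSum E (i + 1) := by
  have hsplit : univ.filter (fun j : Fin m => (i : ℕ) ≤ j) =
      insert i (univ.filter fun j : Fin m => (i : ℕ) + 1 ≤ j) := by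
    ext j
    simp only [mem_filter, mem_univ, true_and, mem_insert, Fin.ext_iff]
    omega
  rw [tailSum, hsplit, sum_insert (by simp)]
  rfl

lemma natCast_tailSum {G : Type*} [AddCommGroupWithOne G] (E : Fin m → ℕ) (f : ℕ → G)
    (hE : ∀ i : Fin m, (E i : G) = f i - f (i + 1)) {i : ℕ} (hi : i ≤ m) :
    (tailSum E i : G) = f i - f m := by
  induction hi using Nat.decreasingInduction with
  | self => rw [tailSum_of_le E le_rfl, Nat.cast_zero, sub_self]
  | of_succ k hk ih =>
    rw [tailSum_eq_add E ⟨k, hk⟩, Nat.cast_add, hE, ih]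
    abel

end TailSum

section DescentMonomial

variable {n r m : ℕ}

def btdExp (w : CWord n r m) (d : Fin m → ℕ) (i : Fin m) : ℕ := mExp w i + r * d i

def expVec (w : CWord n r m) (d : Fin m → ℕ) : NES n →₀ ℕ :=
  ∑ i, Finsupp.single (prefV w i) (btdExp w d i)

lemma btd_eq_monomial (g : CPerm n r) (d : Fin n → ℕ) : btd g d = monomial (expVec g d) 1 := by
  unfold btd _root_.btw
  rw [← prod_mul_distrib, expVec, monomial_sum_one]
  refine prod_congr rfl fun i _ => ?_
  rw [← pow_add, Yv_pref, X_pow_eq_monomial]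
  rfl

lemma isChainE_expVec (w : CWord n r m) (d : Fin m → ℕ) : IsChainE (expVec w d) :=
  isChainE_sum_single univ (monotone_prefV w) _

lemma content_expVec_letter (w : CWord n r m) (d : Fin m → ℕ) (j : Fin m) :
    content (expVec w d) (w.letter j) = tailSum (btdExp w d) j := by
  simp only [expVec, map_sum, Finset.sum_apply, content_single, prefV, letter_mem_pref_iff,
    Nat.lt_succ_iff, tailSum, sum_filter]

lemma tailSum_btdExp_mod (w : CWord n r m) (d : Fin m → ℕ) (i : Fin m) :
    tailSum (btdExp w d) i % r = w.color i := by
  have hzmod : (tailSum (btdExp w d) i : ZMod r) = colorAt w i := by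
    rw [natCast_tailSum _ (fun i => (colorAt w i : ZMod r)) _ i.2.le, colorAt_of_le w le_rfl,
      Nat.cast_zero, sub_zero]
    intro j
    rw [btdExp, Nat.cast_add, Nat.cast_mul, ZMod.natCast_self, zero_mul, add_zero, natCast_mExp,
      colorAt_val]
  rw [← ZMod.val_natCast, hzmod, colorAt_val, ZMod.val_cast_of_lt (w.color i).2]

end DescentMonomial

section Sorting

lemma eq_of_strictMono_comp {ι α β : Type*} [LinearOrder ι] [WellFoundedLT ι] [Preorder β]
    {f : α → β} (hf : Function.Injective f) {p q : ι → α} (hp : Function.Surjective p)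
    (hq : Function.Surjective q) (hfp : StrictMono (f ∘ p)) (hfq : StrictMono (f ∘ q)) :
    p = q := by
  have hrange : Set.range (f ∘ p) = Set.range (f ∘ q) := by
    rw [Set.range_comp, Set.range_comp, hp.range_eq, hq.range_eq]
  exact funext fun i => hf (congrFun ((hfp.range_inj hfq).1 hrange) i)

lemma Fin.strictMono_of_lt_add_one {m : ℕ} {α : Type*} [Preorder α] {f : Fin m → α}
    (h : ∀ (i : Fin m) (hi : (i : ℕ) + 1 < m), f i < f ⟨i + 1, hi⟩) : StrictMono f := by
  cases m with
  | zero => exact fun i => i.elim0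
  | succ m => exact Fin.strictMono_iff_lt_succ.2 fun i => h i.castSucc (by simp)

variable {n : ℕ}

def sortKey (a : Fin n → ℕ) (l : Fin n) : Lex (ℕᵒᵈ × Fin n) := toLex (OrderDual.toDual (a l), l)

lemma sortKey_injective (a : Fin n → ℕ) : Function.Injective (sortKey a) :=
  fun _ _ h => congrArg (fun x => (ofLex x).2) h

lemma sortKey_lt_sortKey {a : Fin n → ℕ} {l l' : Fin n} :
    sortKey a l < sortKey a l' ↔ a l' < a l ∨ a l = a l' ∧ l < l' := by
  simp only [sortKey, Prod.Lex.toLex_lt_toLex, OrderDual.toDual_lt_toDual, EmbeddingLike.apply_eq_iff_eq]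

end Sorting

section Bijection

variable {n r : ℕ}

lemma strictMono_sortKey_content_letter {m : ℕ} (w : CWord n r m) (d : Fin m → ℕ) :
    StrictMono (sortKey (content (expVec w d)) ∘ w.letter) := by
  refine Fin.strictMono_of_lt_add_one fun i hi => ?_
  simp only [Function.comp_apply, sortKey_lt_sortKey, content_expVec_letter]
  rw [tailSum_eq_add _ i]
  rcases Nat.eq_zero_or_pos (btdExp w d i) with h0 | hpos
  · refine Or.inr ⟨by rw [h0, zero_add], letter_lt_of_mExp_eq_zero ?_ hi⟩
    exact Nat.eq_zero_of_add_eq_zero_right h0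
  · exact Or.inl (Nat.lt_add_of_pos_left hpos)

theorem injective_content_expVec :
    Function.Injective fun gd : CPerm n r × (Fin n → ℕ) => content (expVec gd.1 gd.2) := by
  rintro ⟨g, d⟩ ⟨g', d'⟩ h
  dsimp only at h
  have hletter : g.letter = g'.letter :=
    eq_of_strictMono_comp (sortKey_injective _) (Finite.surjective_of_injective g.inj)
      (Finite.surjective_of_injective g'.inj) (strictMono_sortKey_content_letter g d)
      (h ▸ strictMono_sortKey_content_letter g' d')
  have htail : ∀ i : ℕ, tailSum (btdExp g d) i = tailSum (btdExp g' d') i := by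
    intro i
    by_cases hi : i < n
    · rw [← content_expVec_letter g d ⟨i, hi⟩, ← content_expVec_letter g' d' ⟨i, hi⟩, h,
        hletter]
    · rw [tailSum_of_le _ (not_lt.1 hi), tailSum_of_le _ (not_lt.1 hi)]
  have hcolor : g.color = g'.color := funext fun i => Fin.ext <| by
    rw [← tailSum_btdExp_mod g d i, ← tailSum_btdExp_mod g' d' i, htail]
  obtain rfl : g = g' := by
    cases g
    cases g'
    cases hletter
    cases hcolor
    rfl
  refine Prod.ext rfl (funext fun i => Nat.eq_of_mul_eq_mul_left (g.color i).pos ?_)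
  dsimp only
  have h1 := tailSum_eq_add (btdExp g d) i
  have h2 := tailSum_eq_add (btdExp g d') i
  rw [htail, htail] at h1
  simp only [btdExp] at h1 h2
  omega

lemma Nat.mod_sub_mod_add_mul_div_sub {r x y : ℕ} (hyx : y ≤ x) (hmod : y % r ≤ x % r) :
    x % r - y % r + r * (x / r - y / r) = x - y := by
  have hq : r * (y / r) ≤ r * (x / r) := Nat.mul_le_mul_left r (Nat.div_le_div_right hyx)
  have := Nat.div_add_mod x r
  have := Nat.div_add_mod y r
  rw [Nat.mul_sub]
  omega

lemma Nat.add_mod_sub_mod_add_mul_div_sub {r x y : ℕ} (hyx : y < x) (hmod : x % r ≤ y % r) :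
    r + x % r - y % r + r * (x / r - y / r - 1) = x - y := by
  rcases Nat.eq_zero_or_pos r with rfl | hr
  · simp only [Nat.mod_zero] at hmod
    omega
  have hx := Nat.div_add_mod x r
  have hy := Nat.div_add_mod y r
  have hq : y / r + 1 ≤ x / r := by
    by_contra! hle
    have := Nat.mul_le_mul_left r (Nat.le_of_lt_succ hle)
    omega
  obtain ⟨k, hk⟩ := Nat.exists_eq_add_of_le hq
  rw [hk, Nat.mul_add, Nat.mul_add, mul_one] at hx
  rw [hk, show y / r + 1 + k - y / r - 1 = k by omega]
  have := Nat.mod_lt y hr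
  omega

lemma mExp_add_mul_eq_sub {m : ℕ} (w : CWord n r m) {b : ℕ → ℕ}
    (hcol : ∀ i, colorAt w i = b i % r) (i : Fin m) (hb : b (i + 1) ≤ b i)
    (hdes : i ∈ DesSet w → b (i + 1) < b i) :
    mExp w i + r * (b i / r - b (i + 1) / r - if i ∈ DesSet w then 1 else 0) =
      b i - b (i + 1) := by
  rw [mExp_eq_ite, ← colorAt_val, hcol, hcol]
  split_ifs with hd
  · have := (color_le_colorAt_succ_of_mem_DesSet hd).1
    rw [← colorAt_val, hcol, hcol] at this
    exact Nat.add_mod_sub_mod_add_mul_div_sub (hdes hd) this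
  · have := colorAt_succ_le_color_of_notMem_DesSet hd
    rw [← colorAt_val, hcol, hcol] at this
    exact Nat.mod_sub_mod_add_mul_div_sub hb this

theorem surjective_content_expVec (hr : 0 < r) :
    Function.Surjective fun gd : CPerm n r × (Fin n → ℕ) => content (expVec gd.1 gd.2) := by
  intro a
  set σ := Tuple.sort (sortKey a)
  have hσ : StrictMono (sortKey a ∘ σ) := (Tuple.monotone_sort _).strictMono_of_injective
    ((sortKey_injective a).comp σ.injective)
  set b : ℕ → ℕ := fun i => if h : i < n then a (σ ⟨i, h⟩) else 0 with hb
  set g : CPerm n r := ⟨σ, σ.injective, fun i => ⟨b i % r, Nat.mod_lt _ hr⟩⟩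
  have hcol : ∀ i, colorAt g i = b i % r := by
    intro i
    unfold colorAt
    split_ifs with hi
    · rfl
    · simp [hb, hi]
  have hstep : ∀ i : Fin n, b (i + 1) ≤ b i ∧ (b (i + 1) = b i → i ∉ DesSet g) := by
    intro i
    by_cases hi : (i : ℕ) + 1 < n
    · have hlt := sortKey_lt_sortKey.1 (hσ (show i < ⟨i + 1, hi⟩ from Fin.lt_def.2 (by simp)))
      have hbi : b i = a (σ i) := dif_pos i.2
      have hbi1 : b (i + 1) = a (σ ⟨i + 1, hi⟩) := dif_pos hi
      refine ⟨by omega, fun heq => notMem_DesSet_of_color_eq_of_letter_lt fun _ => ⟨?_, ?_⟩⟩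
      · show b (i + 1) % r = b i % r
        rw [heq]
      · exact (hlt.resolve_left (by omega)).2
    · exact ⟨by simp [hb, hi], fun _ => notMem_DesSet_of_color_eq_of_letter_lt
        fun h => absurd h hi⟩
  set d : Fin n → ℕ := fun i => b i / r - b (i + 1) / r - if i ∈ DesSet g then 1 else 0
  have hexp : ∀ i, (btdExp g d i : ℤ) = b i - b (i + 1) := fun i => by
    rw [btdExp, mExp_add_mul_eq_sub g hcol i (hstep i).1
      fun hd => lt_of_le_of_ne (hstep i).1 fun h => (hstep i).2 h hd, Nat.cast_sub (hstep i).1]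
  refine ⟨(g, d), funext fun l => ?_⟩
  obtain ⟨j, rfl⟩ := σ.surjective l
  have htail := natCast_tailSum (btdExp g d) (fun i => (b i : ℤ)) hexp j.2.le
  have hbj : b j = a (σ j) := dif_pos j.2
  have hbn : b n = 0 := dif_neg (lt_irrefl n)
  simp only [hbj, hbn, Nat.cast_zero, sub_zero] at htail
  show content (expVec g d) (g.letter j) = _
  rw [content_expVec_letter]
  exact_mod_cast htail

end Bijection

theorem multichain_monomial_eq_btd_unique_general (n r : ℕ) (hr : 1 ≤ r)
    (t : ℕ) (S : Fin t → NES n) (hS : ∀ i j : Fin t, i ≤ j → (S i).1 ⊆ (S j).1) :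
    ∃! gd : CPerm n r × (Fin n → ℕ), (∏ j, X (S j) : YRing n) = btd gd.1 gd.2 := by
  set e : NES n →₀ ℕ := ∑ j, Finsupp.single (S j) 1
  have he : (∏ j, X (S j) : YRing n) = monomial e 1 := by
    rw [monomial_sum_one]
    rfl
  have hchain : IsChainE e := isChainE_sum_single univ (fun i j hij => hS i j hij) _
  obtain ⟨⟨g, d⟩, hgd⟩ := surjective_content_expVec hr (content e)
  refine ⟨(g, d), ?_, fun gd h => injective_content_expVec ?_⟩
  · show _ = btd g d
    rw [he, btd_eq_monomial, (isChainE_expVec g d).eq_of_content_eq hchain hgd]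
  · rw [he, btd_eq_monomial] at h
    exact (congrArg content (monomial_left_injective one_ne_zero h)).symm.trans hgd.symm

/-- Every multichain monomial `y_{S_1} ⋯ y_{S_t}` in `ℂ[y_S]`
equals `b̃_{(g,d)}` for exactly one pair `(g, d) ∈ G_n × ℤ_{≥0}^n`. -/
theorem multichain_monomial_eq_btd_unique (n r : ℕ) (hr : 1 ≤ r) (hn : 1 ≤ n)
    (t : ℕ) (S : Fin t → NES n) (hS : ∀ i j : Fin t, i ≤ j → (S i).1 ⊆ (S j).1) :
    ∃! gd : CPerm n r × (Fin n → ℕ), (∏ j, X (S j) : YRing n) = btd gd.1 gd.2 :=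
  multichain_monomial_eq_btd_unique_general n r hr t S hS

end
end
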